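/- Under the hypotheses of the Lax–DiPerna identity (Hugoniot curve S(s), speed σ(s) with compatibility ∇q = ∇η ∇f), for any s ≥ 0 and s₀ > 0: q(S(s)|S(s₀)) − σ(s) η(S(s)|S(s₀)) = ∫_{s₀}^{s} σ'(t) (η(u|S(t)) − η(u|S(s₀))) dt. -/

import Mathlib

open scoped RealInnerProductSpace

/-- relative entropy η(a|b) -/
noncomputable def relEta {n : ℕ} (η : EuclideanSpace ℝ (Fin n) → ℝ)
    (a b : EuclideanSpace ℝ (Fin n)) : ℝ :=
  η a - η b - ⟪gradient η b, a - b⟫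

/-- relative entropy flux q(a|b) -/
noncomputable def relQ {n : ℕ} (f : EuclideanSpace ℝ (Fin n) → EuclideanSpace ℝ (Fin n))
    (η q : EuclideanSpace ℝ (Fin n) → ℝ) (a b : EuclideanSpace ℝ (Fin n)) : ℝ :=
  q a - q b - ⟪gradient η b, f a - f b⟫

/-!
Fix `b = S(s₀)` and put `F(t) = q(S(t)|b) − σ(t) η(S(t)|b)`, so that `F(s₀) = 0`. Differentiating
the Rankine–Hugoniot relation gives `(f ∘ S)' = σ S' + σ' (S − u)`, and the compatibility
`∇q = ∇η ∇f` turns `(q ∘ S)'` into `⟪∇η(S), (f ∘ S)'⟫`. In `F'` the terms carrying `σ S'` cancel,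
leaving `σ' (⟪∇η(S) − ∇η(b), S − u⟫ − η(S|b))`, which is `σ' (η(u|S) − η(u|b))` by a
three-point identity for relative entropies. The fundamental theorem of calculus concludes.
-/

theorem ContDiff.continuous_gradient {F : Type*} [NormedAddCommGroup F] [InnerProductSpace ℝ F]
    [CompleteSpace F] {η : F → ℝ} {k : WithTop ℕ∞} (hη : ContDiff ℝ k η) (hk : k ≠ 0) :
    Continuous (gradient η) :=
  (InnerProductSpace.toDual ℝ F).symm.continuous.comp (hη.continuous_fderiv hk)

theorem HasDerivAt.comp_of_rankine_hugoniot {E : Type*} [NormedAddCommGroup E] [NormedSpace ℝ E]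
    {f : E → E} {S : ℝ → E} {σ : ℝ → ℝ} {u S' : E} {σ' t : ℝ}
    (hRH : ∀ s, f (S s) - f u = σ s • (S s - u)) (hS : HasDerivAt S S' t)
    (hσ : HasDerivAt σ σ' t) :
    HasDerivAt (fun s => f (S s)) (σ t • S' + σ' • (S t - u)) t := by
  have hfS : (fun s => f (S s)) = fun s => σ s • (S s - u) + f u := by
    funext s
    rw [← hRH s, sub_add_cancel]
  rw [hfS]
  exact (hσ.fun_smul (hS.sub_const u)).add_const (f u)

section RelativeEntropy

variable {n : ℕ}

theorem relEta_sub_relEta (η : EuclideanSpace ℝ (Fin n) → ℝ) (u a b : EuclideanSpace ℝ (Fin n)) :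
    relEta η u a - relEta η u b = ⟪gradient η a - gradient η b, a - u⟫ - relEta η a b := by
  simp only [relEta, inner_sub_left, inner_sub_right]
  ring

variable {η : EuclideanSpace ℝ (Fin n) → ℝ} {γ : ℝ → EuclideanSpace ℝ (Fin n)} {γ' : EuclideanSpace ℝ (Fin n)} {t : ℝ}

theorem HasDerivAt.relEta_left (hη : DifferentiableAt ℝ η (γ t)) (hγ : HasDerivAt γ γ' t)
    (b : EuclideanSpace ℝ (Fin n)) :
    HasDerivAt (fun s => relEta η (γ s) b) ⟪gradient η (γ t) - gradient η b, γ'⟫ t := by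
  have hηγ : HasDerivAt (fun s => η (γ s)) ⟪gradient η (γ t), γ'⟫ t := by
    rw [inner_gradient_left]
    exact hη.hasFDerivAt.comp_hasDerivAt t hγ
  have hlin : HasDerivAt (fun s => ⟪gradient η b, γ s - b⟫) ⟪gradient η b, γ'⟫ t := by
    simpa only [Function.comp_def, innerSL_apply_apply] using
      (innerSL ℝ (gradient η b)).hasFDerivAt.comp_hasDerivAt t (hγ.sub_const b)
  rw [inner_sub_left]
  exact (hηγ.sub_const (η b)).sub hlin

theorem HasDerivAt.relQ_left {f : EuclideanSpace ℝ (Fin n) → EuclideanSpace ℝ (Fin n)}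
    {q : EuclideanSpace ℝ (Fin n) → ℝ} {v : EuclideanSpace ℝ (Fin n)}
    (hf : DifferentiableAt ℝ f (γ t)) (hq : DifferentiableAt ℝ q (γ t))
    (hcomp : ∀ h, fderiv ℝ q (γ t) h = ⟪gradient η (γ t), fderiv ℝ f (γ t) h⟫)
    (hγ : HasDerivAt γ γ' t) (hfγ : HasDerivAt (fun s => f (γ s)) v t)
    (b : EuclideanSpace ℝ (Fin n)) :
    HasDerivAt (fun s => relQ f η q (γ s) b) ⟪gradient η (γ t) - gradient η b, v⟫ t := by
  have hv : fderiv ℝ f (γ t) γ' = v := (hf.hasFDerivAt.comp_hasDerivAt t hγ).unique hfγ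
  have hqγ : HasDerivAt (fun s => q (γ s)) ⟪gradient η (γ t), v⟫ t := by
    rw [← hv, ← hcomp]
    exact hq.hasFDerivAt.comp_hasDerivAt t hγ
  have hlin : HasDerivAt (fun s => ⟪gradient η b, f (γ s) - f b⟫) ⟪gradient η b, v⟫ t := by
    simpa only [Function.comp_def, innerSL_apply_apply] using
      (innerSL ℝ (gradient η b)).hasFDerivAt.comp_hasDerivAt t (hfγ.sub_const (f b))
  rw [inner_sub_left]
  exact (hqγ.sub_const (q b)).sub hlin

theorem HasDerivAt.relQ_sub_mul_relEta {f : EuclideanSpace ℝ (Fin n) → EuclideanSpace ℝ (Fin n)}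
    {q : EuclideanSpace ℝ (Fin n) → ℝ} {S : ℝ → EuclideanSpace ℝ (Fin n)} {σ : ℝ → ℝ}
    {u S' : EuclideanSpace ℝ (Fin n)} {σ' : ℝ}
    (hf : DifferentiableAt ℝ f (S t)) (hη : DifferentiableAt ℝ η (S t))
    (hq : DifferentiableAt ℝ q (S t))
    (hcomp : ∀ h, fderiv ℝ q (S t) h = ⟪gradient η (S t), fderiv ℝ f (S t) h⟫)
    (hRH : ∀ s, f (S s) - f u = σ s • (S s - u)) (hS : HasDerivAt S S' t)
    (hσ : HasDerivAt σ σ' t) (b : EuclideanSpace ℝ (Fin n)) :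
    HasDerivAt (fun s => relQ f η q (S s) b - σ s * relEta η (S s) b)
      (σ' * (relEta η u (S t) - relEta η u b)) t := by
  have hQ := hS.relQ_left hf hq hcomp (hS.comp_of_rankine_hugoniot hRH hσ) b
  have hE := hσ.fun_mul (hS.relEta_left hη b)
  refine (hQ.sub hE).congr_deriv ?_
  rw [relEta_sub_relEta, inner_add_right, real_inner_smul_right, real_inner_smul_right]
  ring

end RelativeEntropy

theorem diperna_identity_general {n : ℕ}
    (f : EuclideanSpace ℝ (Fin n) → EuclideanSpace ℝ (Fin n))
    (η q : EuclideanSpace ℝ (Fin n) → ℝ)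
    (hf : ContDiff ℝ 1 f) (hη : ContDiff ℝ 2 η)
    (hq : ContDiff ℝ 1 q)
    (hcomp : ∀ x h, fderiv ℝ q x h = ⟪gradient η x, fderiv ℝ f x h⟫)
    (u : EuclideanSpace ℝ (Fin n)) (S : ℝ → EuclideanSpace ℝ (Fin n)) (σ : ℝ → ℝ)
    (hS : ContDiff ℝ 1 S) (hσ : ContDiff ℝ 1 σ)
    (hRH : ∀ s, f (S s) - f u = σ s • (S s - u)) :
    ∀ s ≥ (0:ℝ), ∀ s₀ > (0:ℝ),
      relQ f η q (S s) (S s₀) - σ s * relEta η (S s) (S s₀)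
        = ∫ t in s₀..s, deriv σ t * (relEta η u (S t) - relEta η u (S s₀)) := by
  intro s _ s₀ _
  have hderiv (t : ℝ) := HasDerivAt.relQ_sub_mul_relEta (hf.differentiable one_ne_zero _)
    (hη.differentiable two_ne_zero _) (hq.differentiable one_ne_zero _) (hcomp (S t)) hRH
    ((hS.differentiable one_ne_zero t).hasDerivAt) ((hσ.differentiable one_ne_zero t).hasDerivAt)
    (S s₀)
  have hcont : Continuous fun t => deriv σ t * (relEta η u (S t) - relEta η u (S s₀)) := by
    unfold relEta
    have := hη.continuous_gradient two_ne_zero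
    have := hσ.continuous_deriv le_rfl
    have := hη.continuous
    have := hS.continuous
    fun_prop
  rw [intervalIntegral.integral_eq_sub_of_hasDerivAt (fun t _ => hderiv t)
    (hcont.intervalIntegrable s₀ s)]
  simp [relQ, relEta]

/-- DiPerna-type identity: under the hypotheses of the Lax identity, for any s ≥ 0 and s₀ > 0,
q(S(s)|S(s₀)) − σ(s) η(S(s)|S(s₀)) = ∫_{s₀}^{s} σ'(t) (η(u|S(t)) − η(u|S(s₀))) dt. -/
theorem diperna_identity {n : ℕ}
    (f : EuclideanSpace ℝ (Fin n) → EuclideanSpace ℝ (Fin n))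
    (η q : EuclideanSpace ℝ (Fin n) → ℝ)
    (hf : ContDiff ℝ 1 f) (hη : ContDiff ℝ 2 η)
    (hηconv : StrictConvexOn ℝ Set.univ η) (hq : ContDiff ℝ 1 q)
    (hcomp : ∀ x h, fderiv ℝ q x h = ⟪gradient η x, fderiv ℝ f x h⟫)
    (u : EuclideanSpace ℝ (Fin n)) (S : ℝ → EuclideanSpace ℝ (Fin n)) (σ : ℝ → ℝ)
    (hS : ContDiff ℝ 1 S) (hσ : ContDiff ℝ 1 σ) (hS0 : S 0 = u)
    (hRH : ∀ s, f (S s) - f u = σ s • (S s - u)) :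
    ∀ s ≥ (0:ℝ), ∀ s₀ > (0:ℝ),
      relQ f η q (S s) (S s₀) - σ s * relEta η (S s) (S s₀)
        = ∫ t in s₀..s, deriv σ t * (relEta η u (S t) - relEta η u (S s₀)) :=
  diperna_identity_general f η q hf hη hq hcomp u S σ hS hσ hRH
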